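/- Assume the gap data satisfies conditions (i) and (ii) and that 0 < ε ≤ 1. Then there exists σ₀ > 0, depending only on a, b, κ₀ and ν, such that for every E ∈ S and every σ with 0 < σ ≤ σ₀ and E − σ ≥ E̲, one has |(E − σ, E + σ) ∩ S| > σ/2. -/

import Mathlib

open MeasureTheory

/-- The sup-norm of a lattice point `m ∈ ℤ^ν`, as a real number. -/
noncomputable def snorm {ν : ℕ} (m : Fin ν → ℤ) : ℝ :=
  ((Finset.univ.sup fun i => (m i).natAbs : ℕ) : ℝ)

lemma snorm_nonneg {ν : ℕ} (m : Fin ν → ℤ) : 0 ≤ snorm m := Nat.cast_nonneg _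

lemma abs_le_snorm {ν : ℕ} (m : Fin ν → ℤ) (i : Fin ν) : |(m i : ℝ)| ≤ snorm m := by
  have h : ((m i).natAbs : ℝ) ≤ snorm m := Nat.cast_le.mpr (Finset.le_sup (f := fun i => (m i).natAbs) (Finset.mem_univ i))
  have he : |(m i : ℝ)| = ((m i).natAbs : ℝ) := by
    rw [Nat.cast_natAbs, Int.cast_abs]
  rwa [he]

lemma one_le_snorm {ν : ℕ} (m : Fin ν → ℤ) (hm : m ≠ 0) : 1 ≤ snorm m := by
  obtain ⟨i, hi⟩ : ∃ i, m i ≠ 0 := by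
    by_contra h
    push_neg at h
    exact hm (funext fun i => h i)
  have h1 : 1 ≤ (m i).natAbs := Int.natAbs_pos.mpr hi
  have := Finset.le_sup (f := fun i => (m i).natAbs) (Finset.mem_univ i)
  exact_mod_cast Nat.cast_le.mpr (le_trans h1 this)

lemma summable_exp_int (r : ℝ) (hr : 0 < r) :
    Summable (fun k : ℤ => Real.exp (-r * |(k : ℝ)|)) := by
  have hnat : Summable (fun n : ℕ => Real.exp ((n : ℝ) * (-r))) :=
    Real.summable_exp_nat_mul_iff.mpr (by linarith)
  apply Summable.of_nat_of_neg
  · refine hnat.congr fun n => ?_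
    simp [mul_comm]
  · refine hnat.congr fun n => ?_
    simp [mul_comm]

lemma summable_pi_exp (n : ℕ) (r : ℝ) (hr : 0 < r) :
    Summable (fun m : Fin n → ℤ => ∏ i, Real.exp (-r * |(m i : ℝ)|)) := by
  induction n with
  | zero => exact Summable.of_finite
  | succ n ih =>
    have h := (summable_exp_int r hr).mul_of_nonneg ih
      (fun k => (Real.exp_pos _).le)
      (fun m => Finset.prod_nonneg fun i _ => (Real.exp_pos _).le)
    rw [← (Fin.consEquiv (fun _ : Fin (n+1) => ℤ)).summable_iff]
    refine h.congr fun x => ?_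
    show _ = ∏ i, Real.exp (-r * |((Fin.consEquiv (fun _ : Fin (n+1) => ℤ) x) i : ℝ)|)
    rw [Fin.prod_univ_succ]
    simp [Fin.consEquiv]

lemma summable_exp_snorm (ν : ℕ) (hν : 1 ≤ ν) (d : ℝ) (hd : 0 < d) :
    Summable (fun m : Fin ν → ℤ => Real.exp (-d * snorm m)) := by
  refine Summable.of_nonneg_of_le (fun m => (Real.exp_pos _).le) (fun m => ?_)
    (summable_pi_exp ν (d/ν) (by positivity))
  rw [← Real.exp_sum]
  apply Real.exp_le_exp.mpr
  have h1 : ∑ i : Fin ν, (d/ν) * |(m i : ℝ)| ≤ ∑ _i : Fin ν, (d/ν) * snorm m :=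
    Finset.sum_le_sum fun i _ => by
      have := abs_le_snorm m i
      have hdn : 0 ≤ d / ν := by positivity
      nlinarith
  rw [Finset.sum_const, Finset.card_univ, Fintype.card_fin] at h1
  have : ∑ i : Fin ν, -(d/ν) * |(m i : ℝ)| = -(∑ i : Fin ν, (d/ν) * |(m i : ℝ)|) := by
    rw [← Finset.sum_neg_distrib]; congr 1; ext i; ring
  rw [this]
  simp only [nsmul_eq_mul] at h1
  have hνr : (ν : ℝ) ≠ 0 := by positivity
  have h2 : (ν : ℝ) * ((d/ν) * snorm m) = d * snorm m := by field_simp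
  linarith [h1, h2]

set_option maxHeartbeats 1000000 in
/-- If the gap data satisfies conditions (i) and (ii) and `0 < ε ≤ 1`, then there is
`σ₀ > 0` depending only on `a, b, κ₀, ν` such that for every `E ∈ S` and every
`0 < σ ≤ σ₀` with `E - σ ≥ E̲`, one has `|(E - σ, E + σ) ∩ S| > σ/2`. -/
theorem homogeneity_away_from_bottom
    (ν : ℕ) (hν : 1 ≤ ν) (a b κ₀ : ℝ) (ha : 0 < a) (hb : 0 < b) (hκ₀ : 0 < κ₀) :
    ∃ σ₀ : ℝ, 0 < σ₀ ∧
      ∀ (ε Elow : ℝ) (Em Ep : (Fin ν → ℤ) → ℝ),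
        0 < ε → ε ≤ 1 →
        -- gap data: `E_m⁻ ≤ E_m⁺`
        (∀ m : Fin ν → ℤ, m ≠ 0 → Em m ≤ Ep m) →
        -- condition (i)
        (∀ m : Fin ν → ℤ, m ≠ 0 →
          Ep m - Em m ≤ 2 * ε * Real.exp (-(κ₀ / 2) * snorm m)) →
        -- condition (ii): `dist([E_m⁻, E_m⁺], [E_{m'}⁻, E_{m'}⁺]) ≥ a |m'|^{-b}`
        (∀ m m' : Fin ν → ℤ, m ≠ 0 → m' ≠ 0 → m' ≠ m → snorm m ≤ snorm m' →
          ∀ x ∈ Set.Icc (Em m) (Ep m), ∀ y ∈ Set.Icc (Em m') (Ep m'),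
            a * snorm m' ^ (-b) ≤ |x - y|) →
        ∀ E ∈ Set.Ici Elow \ ⋃ m ∈ {m : Fin ν → ℤ | m ≠ 0}, Set.Ioo (Em m) (Ep m),
          ∀ σ : ℝ, 0 < σ → σ ≤ σ₀ → Elow ≤ E - σ →
            ENNReal.ofReal (σ / 2) <
              volume (Set.Ioo (E - σ) (E + σ) ∩
                (Set.Ici Elow \ ⋃ m ∈ {m : Fin ν → ℤ | m ≠ 0}, Set.Ioo (Em m) (Ep m))) := by
  classical
  have hd0 : 0 < κ₀ / 4 := by linarith
  set K : ℝ := ∑' m : Fin ν → ℤ, Real.exp (-(κ₀/4) * snorm m) with hKdef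
  have hKsum : Summable (fun m : Fin ν → ℤ => Real.exp (-(κ₀/4) * snorm m)) :=
    summable_exp_snorm ν hν (κ₀/4) hd0
  have hK0 : 0 ≤ K := tsum_nonneg fun m => (Real.exp_pos _).le
  have htend := tendsto_rpow_mul_exp_neg_mul_atTop_nhds_zero b (κ₀/4) hd0
  have hlim : ∀ᶠ t in Filter.atTop, t ^ b * Real.exp (-(κ₀/4) * t) < a / (16 * (K + 1)) :=
    htend.eventually_lt_const (by positivity)
  obtain ⟨T₁, hT₁⟩ := Filter.eventually_atTop.mp hlim
  set T₀ : ℝ := max T₁ 1 with hT₀def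
  have hT₀1 : (1:ℝ) ≤ T₀ := le_max_right _ _
  have hT₀pos : (0:ℝ) < T₀ := lt_of_lt_of_le one_pos hT₀1
  have hT₀ : ∀ t, T₀ ≤ t → t ^ b * Real.exp (-(κ₀/4) * t) < a / (16 * (K + 1)) :=
    fun t ht => hT₁ t (le_trans (le_max_left _ _) ht)
  have hT₀b : (0:ℝ) < T₀ ^ b := Real.rpow_pos_of_pos hT₀pos b
  refine ⟨a / (2 * T₀ ^ b), by positivity, ?_⟩
  intro ε Elow Em Ep hε hε1 hEmEp hcondi hcondii E hE σ hσ hσ0 hElow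
  obtain ⟨hEIci, hEG⟩ := hE
  set G := ⋃ m ∈ {m : Fin ν → ℤ | m ≠ 0}, Set.Ioo (Em m) (Ep m) with hGdef
  set I := Set.Ioo (E - σ) (E + σ) with hIdef
  have hEnotgap : ∀ m : Fin ν → ℤ, m ≠ 0 → E ∉ Set.Ioo (Em m) (Ep m) := by
    intro m hm hmem
    exact hEG (Set.mem_biUnion hm hmem)
  -- the threshold T
  set T : ℝ := (a / (2 * σ)) ^ (1/b) with hTdef
  have hba : (0:ℝ) < a / (2 * σ) := by positivity
  have h1 : T₀ ^ b ≤ a / (2 * σ) := by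
    rw [le_div_iff₀ (by linarith)]
    rw [le_div_iff₀ (by positivity)] at hσ0
    nlinarith
  have hTT₀ : T₀ ≤ T := by
    have h2 : (T₀ ^ b) ^ (1/b) ≤ T := Real.rpow_le_rpow hT₀b.le h1 (by positivity)
    rwa [← Real.rpow_mul hT₀pos.le, mul_one_div_cancel hb.ne', Real.rpow_one] at h2
  have hT1 : (1:ℝ) ≤ T := le_trans hT₀1 hTT₀
  have hTpos : (0:ℝ) < T := lt_of_lt_of_le one_pos hT1
  have hTb : T ^ b = a / (2 * σ) := by
    rw [hTdef, ← Real.rpow_mul hba.le, one_div_mul_cancel hb.ne', Real.rpow_one]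
  have haT : a * T ^ (-b) = 2 * σ := by
    rw [Real.rpow_neg hTpos.le, hTb]
    field_simp
  -- the exponential bound at T
  have hXpos : (0:ℝ) < Real.exp (-(κ₀/4) * T) := Real.exp_pos _
  have e2 : Real.exp (-(κ₀/4) * T) < σ / (8 * (K + 1)) := by
    have e1 : a / (2*σ) * Real.exp (-(κ₀/4) * T) < a / (16 * (K + 1)) := by
      rw [← hTb]; exact hT₀ T hTT₀
    rw [div_mul_eq_mul_div, div_lt_div_iff₀ (by linarith) (by positivity)] at e1
    rw [lt_div_iff₀ (by positivity)]
    nlinarith [e1, ha]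
  -- at most one gap with small norm meets I
  have uniq : ∀ m m' : Fin ν → ℤ, m ≠ 0 → m' ≠ 0 → snorm m ≤ T → snorm m' ≤ T →
      (I ∩ Set.Ioo (Em m) (Ep m)).Nonempty → (I ∩ Set.Ioo (Em m') (Ep m')).Nonempty →
      m = m' := by
    have key : ∀ m m' : Fin ν → ℤ, m ≠ 0 → m' ≠ 0 → snorm m' ≤ T →
        snorm m ≤ snorm m' → m' ≠ m →
        (I ∩ Set.Ioo (Em m) (Ep m)).Nonempty → (I ∩ Set.Ioo (Em m') (Ep m')).Nonempty →
        False := by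
      intro m m' hm hm' hsm' hle hne ⟨x, hxI, hxg⟩ ⟨y, hyI, hyg⟩
      have hd := hcondii m m' hm hm' hne hle x (Set.Ioo_subset_Icc_self hxg)
        y (Set.Ioo_subset_Icc_self hyg)
      have habs : |x - y| < 2 * σ := by
        rw [abs_sub_lt_iff]
        obtain ⟨hx1, hx2⟩ := hxI
        obtain ⟨hy1, hy2⟩ := hyI
        constructor <;> linarith
      have hsm'pos : (0:ℝ) < snorm m' := lt_of_lt_of_le one_pos (one_le_snorm m' hm')
      have hmono : T ^ (-b) ≤ snorm m' ^ (-b) :=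
        Real.rpow_le_rpow_of_nonpos hsm'pos hsm' (by linarith)
      have : 2 * σ ≤ a * snorm m' ^ (-b) := by
        rw [← haT]
        exact mul_le_mul_of_nonneg_left hmono ha.le
      linarith
    intro m m' hm hm' hsm hsm' hne hne'
    by_contra hmm
    rcases le_total (snorm m) (snorm m') with h | h
    · exact key m m' hm hm' hsm' h (Ne.symm hmm) hne hne'
    · exact key m' m hm' hm hsm h hmm hne' hne
  -- covering of I ∩ G
  have cover : I ∩ G ⊆ (⋃ m ∈ {m : Fin ν → ℤ | m ≠ 0 ∧ snorm m ≤ T}, (I ∩ Set.Ioo (Em m) (Ep m)))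
      ∪ (⋃ m ∈ {m : Fin ν → ℤ | m ≠ 0 ∧ T < snorm m}, Set.Ioo (Em m) (Ep m)) := by
    rintro x ⟨hxI, hxG⟩
    rw [hGdef] at hxG
    simp only [Set.mem_iUnion, Set.mem_setOf_eq, exists_prop] at hxG
    obtain ⟨m, hm0, hxm⟩ := hxG
    rcases le_or_gt (snorm m) T with h | h
    · left
      simp only [Set.mem_iUnion, Set.mem_setOf_eq, exists_prop]
      exact ⟨m, ⟨hm0, h⟩, hxI, hxm⟩
    · right
      simp only [Set.mem_iUnion, Set.mem_setOf_eq, exists_prop]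
      exact ⟨m, ⟨hm0, h⟩, hxm⟩
  -- small part measure bound
  have hsmall : volume (⋃ m ∈ {m : Fin ν → ℤ | m ≠ 0 ∧ snorm m ≤ T},
      (I ∩ Set.Ioo (Em m) (Ep m))) ≤ ENNReal.ofReal σ := by
    by_cases hex : ∃ m₀ : Fin ν → ℤ, (m₀ ≠ 0 ∧ snorm m₀ ≤ T) ∧
        (I ∩ Set.Ioo (Em m₀) (Ep m₀)).Nonempty
    · obtain ⟨m₀, ⟨hm₀0, hm₀T⟩, hm₀ne⟩ := hex
      have hsub : (⋃ m ∈ {m : Fin ν → ℤ | m ≠ 0 ∧ snorm m ≤ T},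
          (I ∩ Set.Ioo (Em m) (Ep m))) ⊆ I ∩ Set.Ioo (Em m₀) (Ep m₀) := by
        intro x hx
        simp only [Set.mem_iUnion, Set.mem_setOf_eq, exists_prop] at hx
        obtain ⟨m, ⟨hm0, hmT⟩, hxm⟩ := hx
        have : m = m₀ := uniq m m₀ hm0 hm₀0 hmT hm₀T ⟨x, hxm⟩ hm₀ne
        rwa [this] at hxm
      refine le_trans (measure_mono hsub) ?_
      have hEnot := hEnotgap m₀ hm₀0
      rw [Set.mem_Ioo, not_and_or, not_lt, not_lt] at hEnot
      rcases hEnot with hE1 | hE2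
      · -- E ≤ Em m₀ : intersection on the right of E
        have : I ∩ Set.Ioo (Em m₀) (Ep m₀) ⊆ Set.Ioo E (E + σ) := by
          rintro x ⟨⟨hx1, hx2⟩, hx3, hx4⟩
          exact ⟨by linarith, hx2⟩
        refine le_trans (measure_mono this) ?_
        rw [Real.volume_Ioo]
        apply ENNReal.ofReal_le_ofReal; linarith
      · -- Ep m₀ ≤ E : intersection on the left of E
        have : I ∩ Set.Ioo (Em m₀) (Ep m₀) ⊆ Set.Ioo (E - σ) E := by
          rintro x ⟨⟨hx1, hx2⟩, hx3, hx4⟩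
          exact ⟨hx1, by linarith⟩
        refine le_trans (measure_mono this) ?_
        rw [Real.volume_Ioo]
        apply ENNReal.ofReal_le_ofReal; linarith
    · push_neg at hex
      have : (⋃ m ∈ {m : Fin ν → ℤ | m ≠ 0 ∧ snorm m ≤ T},
          (I ∩ Set.Ioo (Em m) (Ep m))) = ∅ := by
        apply Set.eq_empty_iff_forall_notMem.mpr
        intro x hx
        simp only [Set.mem_iUnion, Set.mem_setOf_eq, exists_prop] at hx
        obtain ⟨m, hm, hxm⟩ := hx
        rw [hex m hm] at hxm
        exact hxm
      rw [this, measure_empty]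
      exact zero_le
  -- big part measure bound
  have hbig : volume (⋃ m ∈ {m : Fin ν → ℤ | m ≠ 0 ∧ T < snorm m},
      Set.Ioo (Em m) (Ep m)) ≤ ENNReal.ofReal (σ / 4) := by
    set D : ℝ := Real.exp (-(κ₀/4) * T) with hDdef
    calc volume (⋃ m ∈ {m : Fin ν → ℤ | m ≠ 0 ∧ T < snorm m}, Set.Ioo (Em m) (Ep m))
        ≤ ∑' m : {m : Fin ν → ℤ | m ≠ 0 ∧ T < snorm m}, volume (Set.Ioo (Em m) (Ep m)) :=
          measure_biUnion_le volume (Set.to_countable _) _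
      _ ≤ ∑' m : {m : Fin ν → ℤ | m ≠ 0 ∧ T < snorm m},
            ENNReal.ofReal (2 * D * Real.exp (-(κ₀/4) * snorm (m : Fin ν → ℤ))) := by
          apply ENNReal.tsum_le_tsum
          intro m
          obtain ⟨hm0, hmT⟩ := m.2
          rw [Real.volume_Ioo]
          apply ENNReal.ofReal_le_ofReal
          have hc := hcondi m hm0
          have hsplit : Real.exp (-(κ₀/2) * snorm (m : Fin ν → ℤ)) ≤
              D * Real.exp (-(κ₀/4) * snorm (m : Fin ν → ℤ)) := by
            rw [hDdef, ← Real.exp_add]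
            apply Real.exp_le_exp.mpr
            nlinarith [hmT.le, hκ₀]
          nlinarith [Real.exp_pos (-(κ₀/2) * snorm (m : Fin ν → ℤ)), hε,
            Real.exp_pos (-(κ₀/4) * snorm (m : Fin ν → ℤ)), hXpos]
      _ ≤ ∑' m : Fin ν → ℤ, ENNReal.ofReal (2 * D * Real.exp (-(κ₀/4) * snorm m)) :=
          ENNReal.tsum_comp_le_tsum_of_injective Subtype.val_injective _
      _ = ENNReal.ofReal (2 * D) * ∑' m : Fin ν → ℤ, ENNReal.ofReal (Real.exp (-(κ₀/4) * snorm m)) := by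
          rw [← ENNReal.tsum_mul_left]
          congr 1; ext m
          rw [← ENNReal.ofReal_mul (by positivity)]
      _ = ENNReal.ofReal (2 * D) * ENNReal.ofReal K := by
          rw [ENNReal.ofReal_tsum_of_nonneg (fun m => (Real.exp_pos _).le) hKsum]
      _ = ENNReal.ofReal (2 * D * K) := by
          rw [← ENNReal.ofReal_mul (by positivity)]
      _ ≤ ENNReal.ofReal (σ / 4) := by
          apply ENNReal.ofReal_le_ofReal
          have hK1 : (0:ℝ) < K + 1 := by linarith
          have hK1' : K + 1 ≠ 0 := ne_of_gt hK1
          set C := σ / (8 * (K + 1)) with hC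
          have hC0 : 0 ≤ C := by positivity
          have h5 : 2 * D * K ≤ 2 * C * K := by nlinarith [hK0, e2]
          have h6 : 2 * C * K ≤ 2 * C * (K + 1) := by nlinarith [hC0]
          have h7 : 2 * C * (K + 1) = σ / 4 := by
            rw [hC]; field_simp; ring
          linarith
  -- conclude
  have htot : volume (I ∩ G) ≤ ENNReal.ofReal σ + ENNReal.ofReal (σ / 4) :=
    le_trans (measure_mono cover) (le_trans (measure_union_le _ _) (add_le_add hsmall hbig))
  by_contra hcon
  push_neg at hcon
  have hsubdiff : I \ G ⊆ I ∩ (Set.Ici Elow \ G) := by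
    rintro x ⟨hxI, hxG⟩
    obtain ⟨hx1, hx2⟩ := hxI
    exact ⟨⟨hx1, hx2⟩, ⟨le_trans hElow hx1.le, hxG⟩⟩
  have h1 : volume (I \ G) ≤ ENNReal.ofReal (σ / 2) :=
    le_trans (measure_mono hsubdiff) hcon
  have h2 : volume I ≤ volume (I \ G) + volume (I ∩ G) := by
    calc volume I = volume ((I \ G) ∪ (I ∩ G)) := by rw [Set.diff_union_inter]
      _ ≤ volume (I \ G) + volume (I ∩ G) := measure_union_le _ _
  rw [hIdef, Real.volume_Ioo] at h2
  have h3 : ENNReal.ofReal (E + σ - (E - σ)) ≤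
      ENNReal.ofReal (σ / 2) + (ENNReal.ofReal σ + ENNReal.ofReal (σ / 4)) :=
    le_trans h2 (add_le_add h1 htot)
  rw [← ENNReal.ofReal_add (by linarith) (by linarith),
      ← ENNReal.ofReal_add (by linarith) (by linarith)] at h3
  have h4 := (ENNReal.ofReal_le_ofReal_iff (by linarith)).mp h3
  linarith
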